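/- arXiv:2002.00109 — 3 statements merged into one kernel-verified Lean document; each statement's English description precedes it below -/
import Mathlib

section
/- Let L be a first-order language of algebras, R an n-ary relation symbol, L' = L ∪ {R}, and K a class of L'-structures closed under finite (equivalently, arbitrary) direct products in which R of a product is the product of the R's. Suppose the formula φ(z̄) = ∃w̄ ⋁_{j=1}^m ⋀_{k=1}^{n_j} p_{jk}(z̄,w̄) = q_{jk}(z̄,w̄) defines R in K. Then there exists some j ∈ {1,…,m} such that the single formula ψ_j(z̄) = ∃w̄ ⋀_{k=1}^{n_j} p_{jk}(z̄,w̄) = q_{jk}(z̄,w̄) already defines R in K. -/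
/-! A counterexample to each disjunct `ψ_j` gives a model `M_j ∈ K` and a tuple `e_j ∈ R^{M_j}`
that fails `ψ_j`. In the product `∏ M_j ∈ K` the tuple `[e_1, …, e_m]` lies in `R`, so `φ` holds
there with some disjunct `ψ_{j₀}`. Primitive-positive formulas pass from a product to its factors,
so `ψ_{j₀}` holds of `e_{j₀}` in `M_{j₀}`: a contradiction. -/

open FirstOrder Language Structure

universe u

instance piStructure {L : Language} {I : Type*} (A : I → Type*) [∀ i, L.Structure (A i)] :
    L.Structure (∀ i, A i) where
  funMap f x i := funMap f fun k => x k i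
  RelMap r x := ∀ i, RelMap r fun k => x k i

/-- An `L'`-structure for `L' = L ∪ {R}`: an `L`-structure together with an interpretation of
the extra `n`-ary relation symbol `R`. -/
structure ModelR (L : Language) (n : ℕ) where
  carrier : Type u
  str : L.Structure carrier
  R : (Fin n → carrier) → Prop

attribute [instance] ModelR.str

/-- Satisfaction of `ψ_j(z̄) = ∃ w̄ ⋀_k p_k(z̄,w̄) = q_k(z̄,w̄)`. -/
def SatPP {L : Language} {n W K : ℕ} (p q : Fin K → L.Term (Fin n ⊕ Fin W))
    (M : Type u) [L.Structure M] (e : Fin n → M) : Prop :=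
  ∃ w : Fin W → M, ∀ k, (p k).realize (Sum.elim e w) = (q k).realize (Sum.elim e w)

namespace FirstOrder.Language

variable {L : Language} {I : Type*} {A : I → Type*} [∀ i, L.Structure (A i)]

theorem Term.realize_pi {α : Type*} (t : L.Term α) (v : α → ∀ i, A i) (i : I) :
    t.realize v i = t.realize fun a => v a i := by
  induction t with
  | var => rfl
  | func f ts ih => exact congrArg (funMap f) (funext ih)

theorem satPP_pi_iff {n W K : ℕ} (p q : Fin K → L.Term (Fin n ⊕ Fin W))
    (e : Fin n → ∀ i, A i) :
    SatPP p q (∀ i, A i) e ↔ ∀ i, SatPP p q (A i) fun k => e k i := by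
  have elim_apply (w : Fin W → ∀ i, A i) (i : I) :
      Sum.elim (fun k => e k i) (fun l => w l i) = fun a => Sum.elim e w a i := by
    ext (_ | _) <;> rfl
  constructor
  · rintro ⟨w, hw⟩ i
    refine ⟨fun l => w l i, fun k => ?_⟩
    simpa only [elim_apply, Term.realize_pi] using congrFun (hw k) i
  · intro h
    choose w hw using h
    refine ⟨fun l i => w i l, fun k => funext fun i => ?_⟩
    simpa only [Term.realize_pi, ← elim_apply] using hw i k

end FirstOrder.Language

def ModelR.pi {L : Language} {n : ℕ} {ι : Type} (M : ι → ModelR.{u} L n) : ModelR.{u} L n :=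
  ⟨∀ i, (M i).carrier, inferInstance, fun e => ∀ i, (M i).R fun k => e k i⟩

theorem stmt1_general {L : Language} {n W m : ℕ} (nj : Fin m → ℕ)
    (p q : (j : Fin m) → Fin (nj j) → L.Term (Fin n ⊕ Fin W))
    (K : ModelR.{u} L n → Prop)
    (hprod : ∀ f : Fin m → ModelR.{u} L n, (∀ j, K (f j)) →
      K ⟨∀ j, (f j).carrier, inferInstance, fun e => ∀ j, (f j).R fun k => e k j⟩)
    (hdef : ∀ M : ModelR.{u} L n, K M → ∀ e : Fin n → M.carrier,
      M.R e ↔ ∃ w : Fin W → M.carrier, ∃ j, ∀ k,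
        (p j k).realize (Sum.elim e w) = (q j k).realize (Sum.elim e w)) :
    ∃ j : Fin m, ∀ M : ModelR.{u} L n, K M → ∀ e : Fin n → M.carrier,
      M.R e ↔ SatPP (p j) (q j) M.carrier e := by
  have hdef' : ∀ M, K M → ∀ e, M.R e ↔ ∃ j, SatPP (p j) (q j) M.carrier e := fun M hM e =>
    (hdef M hM e).trans exists_comm
  by_contra! h
  have counterexample : ∀ j, ∃ M, K M ∧ ∃ e, M.R e ∧ ¬ SatPP (p j) (q j) M.carrier e := by
    intro j
    obtain ⟨M, hM, e, ⟨hR, hS⟩ | ⟨hR, hS⟩⟩ := h j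
    · exact ⟨M, hM, e, hR, hS⟩
    · exact absurd ((hdef' M hM e).2 ⟨j, hS⟩) hR
  choose M hM e hR hS using counterexample
  obtain ⟨j, hj⟩ := (hdef' (ModelR.pi M) (hprod M hM) fun k j => e j k).1 hR
  exact hS j ((satPP_pi_iff (p j) (q j) _).1 hj j)

/-- if `K` is closed under finite direct products (with `R` of a product the
product of the `R`'s) and the disjunction `φ(z̄) = ∃w̄ ⋁_j ⋀_k p_{jk} = q_{jk}` defines `R` in
`K`, then some single disjunct `ψ_j` already defines `R` in `K`. -/
theorem stmt1 {L : Language} {n W m : ℕ} (hm : 0 < m) (nj : Fin m → ℕ)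
    (p q : (j : Fin m) → Fin (nj j) → L.Term (Fin n ⊕ Fin W))
    (K : ModelR.{u} L n → Prop)
    (hprod : ∀ f : Fin m → ModelR.{u} L n, (∀ j, K (f j)) →
      K ⟨∀ j, (f j).carrier, inferInstance, fun e => ∀ j, (f j).R fun k => e k j⟩)
    (hdef : ∀ M : ModelR.{u} L n, K M → ∀ e : Fin n → M.carrier,
      M.R e ↔ ∃ w : Fin W → M.carrier, ∃ j, ∀ k,
        (p j k).realize (Sum.elim e w) = (q j k).realize (Sum.elim e w)) :
    ∃ j : Fin m, ∀ M : ModelR.{u} L n, K M → ∀ e : Fin n → M.carrier,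
      M.R e ↔ SatPP (p j) (q j) M.carrier e :=
  stmt1_general nj p q K hprod hdef
end

section
/- Let σ be an h-ary central relation on a finite set P with h ≥ 3 and h odd, and let (c_1,…,c_h) ∉ σ. Suppose U : P^{N+2} → P, (a_1,…,a_N) ≠ (b_1,…,b_N) ∈ P^N, and U(x,y,a_1,…,a_N) = x and U(x,y,b_1,…,b_N) = y for all x,y ∈ P. Then U does not preserve σ; that is, there exist h-tuples t_1,…,t_{N+2} ∈ σ such that the componentwise application of U to them yields an h-tuple not in σ. -/
/-!
Put the central element `c₀` in coordinate `0` of the non-member `c`, take the constant tuple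
`(c 0, …, c 0)` as second argument, and feed the parameter coordinates with the tuples
`(bᵢ, aᵢ, aᵢ, …)`. All these lie in `σ` (centrality, resp. a repeated entry, which needs `h ≥ 3`),
and `U` selects its second argument in coordinate `0` and its first one elsewhere, giving back `c`.
-/

section SwitchTuples

variable {P ι : Type*} {h : ℕ}

def switchTuples (a b : ι → P) (l₀ : Fin h) (i : ι) : Fin h → P :=
  Function.update (fun _ => a i) l₀ (b i)

lemma switchTuples_apply_of_ne {a b : ι → P} {l₀ l : Fin h} (hl : l ≠ l₀) (i : ι) :
    switchTuples a b l₀ i l = a i :=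
  Function.update_of_ne hl _ _

lemma map_switchTuples {U : P → P → (ι → P) → P} {a b : ι → P}
    (hUa : ∀ x y, U x y a = x) (hUb : ∀ x y, U x y b = y) (l₀ : Fin h) (t₁ t₂ : Fin h → P) :
    (fun l => U (t₁ l) (t₂ l) fun i => switchTuples a b l₀ i l) =
      Function.update t₁ l₀ (t₂ l₀) := by
  funext l
  rcases eq_or_ne l l₀ with rfl | hl
  · simp [switchTuples, hUb]
  · simp [switchTuples_apply_of_ne hl, hUa, hl]

end SwitchTuples

/-- let `σ` be an `h`-ary central relation on a finite set `P` with `h ≥ 3` odd,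
`c ∉ σ`, and let `U : P^{N+2} → P` satisfy `U(x,y,ā) = x` and `U(x,y,b̄) = y` for tuples
`ā ≠ b̄`. Then `U` does not preserve `σ`. -/
theorem stmt5 {P : Type*} {h N : ℕ} (hh3 : 3 ≤ h)
    (σ : (Fin h → P) → Prop)
    (hrefl : ∀ t : Fin h → P, (∃ i j, i ≠ j ∧ t i = t j) → σ t)
    (hcentral : ∃ c0 : P, ∀ t : Fin h → P, t ⟨0, by omega⟩ = c0 → σ t)
    (c : Fin h → P) (hc : ¬ σ c)
    (U : P → P → (Fin N → P) → P) (a b : Fin N → P)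
    (hUa : ∀ x y : P, U x y a = x) (hUb : ∀ x y : P, U x y b = y) :
    ¬ (∀ (t₁ t₂ : Fin h → P) (ts : Fin N → Fin h → P),
        σ t₁ → σ t₂ → (∀ i, σ (ts i)) →
        σ fun l => U (t₁ l) (t₂ l) fun i => ts i l) := by
  intro hU
  obtain ⟨c0, hc0⟩ := hcentral
  let l₀ : Fin h := ⟨0, by omega⟩
  let l₁ : Fin h := ⟨1, by omega⟩
  let l₂ : Fin h := ⟨2, by omega⟩
  have hσ_central : σ (Function.update c l₀ c0) := hc0 _ (Function.update_self ..)
  have hσ_const : σ fun _ => c l₀ := hrefl _ ⟨l₀, l₁, by simp [l₀, l₁], rfl⟩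
  have hσ_switch (i : Fin N) : σ (switchTuples a b l₀ i) :=
    hrefl _ ⟨l₁, l₂, by simp [l₁, l₂], by
      rw [switchTuples_apply_of_ne (by simp [l₀, l₁]), switchTuples_apply_of_ne (by simp [l₀, l₂])]⟩
  apply hc
  simpa [map_switchTuples hUa hUb] using hU _ _ _ hσ_central hσ_const hσ_switch
end

section
/- Let A ≤ ∏_{i∈I} A_i be a global subdirect product with respect to a topology τ on I, and let J ⊆ I be a clopen-like set of the form J = ⋂_{k=1}^N E(e_k, c_k) such that both J and I − J belong to τ (where E(x,y) = {i : x(i) = y(i)}). Define θ = {(a,b) ∈ A² : J ⊆ E(a,b)} and δ = {(a,b) ∈ A² : I−J ⊆ E(a,b)}. Then θ ∩ δ = Δ^A and θ ∘ δ = ∇^A; hence θ and δ are a pair of complementary factor congruences of A. -/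
open FirstOrder Language Structure

universe u v

/-- A congruence of an algebra: an equivalence relation compatible with all operations. -/
def IsCongruence (L : Language) (A : Type*) [L.Structure A] (r : A → A → Prop) : Prop :=
  Equivalence r ∧ ∀ ⦃n : ℕ⦄ (f : L.Functions n) (x y : Fin n → A),
    (∀ i, r (x i) (y i)) → r (funMap f x) (funMap f y)

/-!
Operations act coordinatewise, so agreeing on any fixed set of coordinates is a congruence.
`θ ∩ δ = Δ` because `J ∪ (I − J) = I`. For `θ ∘ δ = ∇`, the disjoint open cover `{J, I − J}`
lets the Patchwork Property glue `a` on `J` with `b` on `I − J` into one element `z`,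
and then `a θ z δ b`.
-/

namespace SubdirectProduct

variable {L : Language} {I : Type u} {A : I → Type v} [∀ i, L.Structure (A i)]
  {S : L.Substructure (∀ i, A i)}

def equalizer (a b : S) : Set I :=
  {i | (a : ∀ j, A j) i = (b : ∀ j, A j) i}

def Patchwork [TopologicalSpace I] (S : L.Substructure (∀ i, A i)) : Prop :=
  ∀ (ι : Type u) (U : ι → Set I) (xr : ι → S),
    (∀ r, IsOpen (U r)) → (⋃ r, U r) = Set.univ →
    (∀ r s, U r ∩ U s ⊆ equalizer (xr r) (xr s)) →
    ∃ x : S, ∀ r, U r ⊆ equalizer x (xr r)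

theorem isCongruence_subset_equalizer (K : Set I) :
    IsCongruence L S fun a b => K ⊆ equalizer a b := by
  refine ⟨⟨fun _ _ _ => rfl, fun h _ hi => (h hi).symm,
    fun hab hbc _ hi => (hab hi).trans (hbc hi)⟩, ?_⟩
  intro n f x y hxy i hi
  show funMap f (fun k => (x k : ∀ j, A j) i) = funMap f fun k => (y k : ∀ j, A j) i
  exact congrArg (funMap f) (funext fun k => hxy k hi)

theorem eq_of_subset_equalizer_of_compl_subset {K : Set I} {a b : S}
    (hK : K ⊆ equalizer a b) (hKc : Kᶜ ⊆ equalizer a b) : a = b := by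
  refine Subtype.ext (funext fun i => ?_)
  by_cases hi : i ∈ K
  · exact hK hi
  · exact hKc hi

theorem Patchwork.exists_glue [TopologicalSpace I] (hS : Patchwork S) {K : Set I}
    (hK : IsOpen K) (hKc : IsOpen Kᶜ) (a b : S) :
    ∃ z : S, K ⊆ equalizer z a ∧ Kᶜ ⊆ equalizer z b := by
  let U : ULift.{u} Bool → Set I := fun r => cond r.down K Kᶜ
  let xr : ULift.{u} Bool → S := fun r => cond r.down a b
  have hU_open : ∀ r, IsOpen (U r) := by
    rintro ⟨_ | _⟩
    exacts [hKc, hK]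
  have hU_cover : (⋃ r, U r) = Set.univ :=
    Set.eq_univ_of_forall fun i => Set.mem_iUnion.2 <| by
      by_cases hi : i ∈ K
      exacts [⟨⟨true⟩, hi⟩, ⟨⟨false⟩, hi⟩]
  have hU_compat : ∀ r s, U r ∩ U s ⊆ equalizer (xr r) (xr s) := by
    rintro ⟨_ | _⟩ ⟨_ | _⟩ i ⟨hr, hs⟩
    exacts [rfl, absurd hs hr, absurd hr hs, rfl]
  obtain ⟨z, hz⟩ := hS _ U xr hU_open hU_cover hU_compat
  exact ⟨z, hz ⟨true⟩, hz ⟨false⟩⟩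

end SubdirectProduct

open SubdirectProduct in
theorem stmt14_general {L : Language} {I : Type u} {A : I → Type v} [∀ i, L.Structure (A i)]
    (S : L.Substructure (∀ i, A i))
    (τ : TopologicalSpace I)
    (hpatch : ∀ (ι : Type u) (U : ι → Set I) (xr : ι → S),
      (∀ r, IsOpen (U r)) → (⋃ r, U r) = Set.univ →
      (∀ r s, U r ∩ U s ⊆ {i | (xr r : ∀ j, A j) i = (xr s : ∀ j, A j) i}) →
      ∃ x : S, ∀ r, U r ⊆ {i | (x : ∀ j, A j) i = (xr r : ∀ j, A j) i})
    (J : Set I)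
    (hJopen : IsOpen J) (hJcopen : IsOpen Jᶜ)
    (θ δ : S → S → Prop)
    (hθ : θ = fun (a b : S) => J ⊆ {i | (a : ∀ j, A j) i = (b : ∀ j, A j) i})
    (hδ : δ = fun (a b : S) => Jᶜ ⊆ {i | (a : ∀ j, A j) i = (b : ∀ j, A j) i}) :
    IsCongruence L S θ ∧ IsCongruence L S δ ∧
    (∀ a b : S, (θ a b ∧ δ a b) ↔ a = b) ∧
    (∀ a b : S, ∃ z : S, θ a z ∧ δ z b) := by
  subst hθ hδ
  refine ⟨isCongruence_subset_equalizer J, isCongruence_subset_equalizer Jᶜ,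
    fun a b => ⟨fun h => eq_of_subset_equalizer_of_compl_subset h.1 h.2, ?_⟩, fun a b => ?_⟩
  · rintro rfl
    exact ⟨fun _ _ => rfl, fun _ _ => rfl⟩
  · obtain ⟨z, hza, hzb⟩ := Patchwork.exists_glue hpatch hJopen hJcopen a b
    exact ⟨z, fun _ hi => (hza hi).symm, hzb⟩

/-- in a global subdirect product `A ≤ ∏ A_i`, for `J = ⋂_k E(e_k,c_k)` with
`J` and `I − J` open, the relations `θ = {(a,b) : J ⊆ E(a,b)}` and `δ = {(a,b) : I−J ⊆ E(a,b)}`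
form a pair of complementary factor congruences: `θ ∩ δ = Δ` and `θ ∘ δ = ∇`. -/
theorem stmt14 {L : Language} {I : Type u} {A : I → Type v} [∀ i, L.Structure (A i)]
    (S : L.Substructure (∀ i, A i))
    (hsub : ∀ i, Function.Surjective fun x : S => (x : ∀ j, A j) i)
    (τ : TopologicalSpace I)
    (hE : ∀ x y : S, IsOpen {i | (x : ∀ j, A j) i = (y : ∀ j, A j) i})
    (hpatch : ∀ (ι : Type u) (U : ι → Set I) (xr : ι → S),
      (∀ r, IsOpen (U r)) → (⋃ r, U r) = Set.univ →
      (∀ r s, U r ∩ U s ⊆ {i | (xr r : ∀ j, A j) i = (xr s : ∀ j, A j) i}) →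
      ∃ x : S, ∀ r, U r ⊆ {i | (x : ∀ j, A j) i = (xr r : ∀ j, A j) i})
    {N : ℕ} (e c : Fin N → S) (J : Set I)
    (hJ : J = ⋂ k, {i | (e k : ∀ j, A j) i = (c k : ∀ j, A j) i})
    (hJopen : IsOpen J) (hJcopen : IsOpen Jᶜ)
    (θ δ : S → S → Prop)
    (hθ : θ = fun (a b : S) => J ⊆ {i | (a : ∀ j, A j) i = (b : ∀ j, A j) i})
    (hδ : δ = fun (a b : S) => Jᶜ ⊆ {i | (a : ∀ j, A j) i = (b : ∀ j, A j) i}) :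
    IsCongruence L S θ ∧ IsCongruence L S δ ∧
    (∀ a b : S, (θ a b ∧ δ a b) ↔ a = b) ∧
    (∀ a b : S, ∃ z : S, θ a z ∧ δ z b) :=
  stmt14_general S τ hpatch J hJopen hJcopen θ δ hθ hδ
end
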